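/- (Induction step in the proof of Theorem 1) Let N ≥ 2, let p ≠ c be indices in Fin N, and let u : Fin N → {0,1} with u(p) = 0; let ū be the bitwise complement of u, and for a bit string x and b ∈ {0,1} let x^{c→b} denote x with its value at c replaced by b. Then exp(−(iπ/4)·Z_pY_c) applied to the vector (1/2)(|u^{c→0}⟩ + |u^{c→1}⟩ + |ū^{c→0}⟩ + |ū^{c→1}⟩) equals (|u^{c→1}⟩ + |ū^{c→0}⟩)/√2. -/

import Mathlib

open Matrix

noncomputable section

/-- An `N`-qubit state: a vector in `ℂ^({0,1}^N)` indexed by bit strings. -/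
abbrev QState (N : ℕ) := (Fin N → Fin 2) → ℂ

/-- An `N`-qubit operator: a `2^N × 2^N` complex matrix indexed by bit strings. -/
abbrev QOp (N : ℕ) := Matrix (Fin N → Fin 2) (Fin N → Fin 2) ℂ

def PauliX : Matrix (Fin 2) (Fin 2) ℂ := !![0, 1; 1, 0]
def PauliY : Matrix (Fin 2) (Fin 2) ℂ := !![0, -Complex.I; Complex.I, 0]
def PauliZ : Matrix (Fin 2) (Fin 2) ℂ := !![1, 0; 0, -1]

/-- The Kronecker (tensor) product `⊗ₖ P k` of one `2 × 2` matrix per qubit. -/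
def pauliString {N : ℕ} (P : Fin N → Matrix (Fin 2) (Fin 2) ℂ) : QOp N :=
  fun x y => ∏ k, P k (x k) (y k)

/-- The operator acting as `A` on qubit `i`, `B` on qubit `j` and identity elsewhere. -/
def twoQubitOp {N : ℕ} (A B : Matrix (Fin 2) (Fin 2) ℂ) (i j : Fin N) : QOp N :=
  pauliString (fun k => if k = i then A else if k = j then B else 1)

/-- Computational basis vector `|x⟩`. -/
def ket {N : ℕ} (x : Fin N → Fin 2) : QState N := fun y => if y = x then 1 else 0

/-- `|+⟩^{⊗N}`, the uniform vector with all coordinates `2^{-N/2}`. -/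
def plusN (N : ℕ) : QState N := fun _ => (((Real.sqrt 2)⁻¹ : ℝ) : ℂ) ^ N

/-- Expectation value `⟨ψ| A |ψ⟩`. -/
def expval {N : ℕ} (ψ : QState N) (A : QOp N) : ℂ :=
  ∑ x, (starRingEnd ℂ) (ψ x) * (A *ᵥ ψ) x

/-- The set of edges of `G`, each listed once as an ordered pair `(i,j)` with `i < j`. -/
def edgePairs {N : ℕ} (G : SimpleGraph (Fin N)) [DecidableRel G.Adj] :
    Finset (Fin N × Fin N) :=
  Finset.univ.filter (fun p : Fin N × Fin N => p.1 < p.2 ∧ G.Adj p.1 p.2)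

/-- The cut size `C(x)`: the number of edges `(i,j)` of `G` with `x i ≠ x j`. -/
def cutSize {N : ℕ} (G : SimpleGraph (Fin N)) [DecidableRel G.Adj] (x : Fin N → Fin 2) : ℕ :=
  ((edgePairs G).filter (fun p => x p.1 ≠ x p.2)).card

/-- The MaxCut Hamiltonian `H_MC = ∑_{(i,j) ∈ E} Z_i Z_j`. -/
def HMC {N : ℕ} (G : SimpleGraph (Fin N)) [DecidableRel G.Adj] : QOp N :=
  ∑ p ∈ edgePairs G, twoQubitOp PauliZ PauliZ p.1 p.2

/-- The cut-counting observable `Ĉ = (1/2) ∑_{(i,j) ∈ E} (1 - Z_i Z_j)`. -/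
def Chat {N : ℕ} (G : SimpleGraph (Fin N)) [DecidableRel G.Adj] : QOp N :=
  (1/2 : ℂ) • ∑ p ∈ edgePairs G, ((1 : QOp N) - twoQubitOp PauliZ PauliZ p.1 p.2)

/-- The gate `e^{-iθ Z_i Y_j / 2}`. -/
def gateZY {N : ℕ} (θ : ℝ) (i j : Fin N) : QOp N :=
  NormedSpace.exp ((-Complex.I * ((θ : ℂ) / 2)) • twoQubitOp PauliZ PauliY i j)

/-- The gate `e^{-iθ Y_i Z_j / 2}`. -/
def gateYZ {N : ℕ} (θ : ℝ) (i j : Fin N) : QOp N :=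
  NormedSpace.exp ((-Complex.I * ((θ : ℂ) / 2)) • twoQubitOp PauliY PauliZ i j)

/-! Since `(Z_p Y_c)² = 1`, the gate is `cos(π/4) - i sin(π/4) Z_p Y_c`. The operator `Z_p Y_c`
flips bit `c` of a basis vector and multiplies it by the phase `±i` fixed by the bits at `p` and
`c`; as `u p = 0` and `ū p = 1` carry opposite signs, the components along `|u^{c→0}⟩` and
`|ū^{c→1}⟩` cancel while those along `|u^{c→1}⟩` and `|ū^{c→0}⟩` add up. -/

open Function

theorem exp_smul_eq_cosh_add_sinh_of_mul_self_eq_one {𝔸 : Type*} [Ring 𝔸] [Algebra ℂ 𝔸]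
    [TopologicalSpace 𝔸] [IsTopologicalRing 𝔸] [T2Space 𝔸] [ContinuousSMul ℂ 𝔸]
    {A : 𝔸} (hA : A * A = 1) (t : ℂ) :
    NormedSpace.exp (t • A) = Complex.cosh t • (1 : 𝔸) + Complex.sinh t • A := by
  have hA2 : A ^ 2 = 1 := by rw [sq, hA]
  rw [NormedSpace.exp_eq_tsum ℂ]
  refine HasSum.tsum_eq (HasSum.even_add_odd ?_ ?_)
  · convert (Complex.hasSum_cosh t).smul_const (1 : 𝔸) using 2 with k
    rw [smul_pow, pow_mul A, hA2, one_pow, smul_smul, inv_mul_eq_div, pow_mul]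
  · convert (Complex.hasSum_sinh t).smul_const A using 2 with k
    rw [smul_pow, pow_succ A, pow_mul A, hA2, one_pow, one_mul, smul_smul, inv_mul_eq_div,
      pow_succ t, pow_mul t]

theorem PauliZ_mul_self : PauliZ * PauliZ = 1 := by
  ext i j
  fin_cases i <;> fin_cases j <;> simp [PauliZ, Matrix.mul_apply, Fin.sum_univ_two]

theorem PauliY_mul_self : PauliY * PauliY = 1 := by
  ext i j
  fin_cases i <;> fin_cases j <;> simp [PauliY, Matrix.mul_apply, Fin.sum_univ_two]

theorem PauliZ_apply_eq_ite (a b : Fin 2) : PauliZ b a = if b = a then PauliZ a a else 0 := by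
  fin_cases a <;> fin_cases b <;> simp [PauliZ]

theorem PauliY_apply_eq_ite (a b : Fin 2) :
    PauliY b a = if b = 1 - a then PauliY (1 - a) a else 0 := by
  fin_cases a <;> fin_cases b <;> simp [PauliY]

section
variable {N : ℕ}

theorem pauliString_mul (P Q : Fin N → Matrix (Fin 2) (Fin 2) ℂ) :
    pauliString P * pauliString Q = pauliString (fun k => P k * Q k) := by
  ext x y
  simp only [Matrix.mul_apply, pauliString, ← Finset.prod_mul_distrib]
  rw [Finset.prod_univ_sum, Fintype.piFinset_univ]

theorem pauliString_one : pauliString (fun _ : Fin N => (1 : Matrix (Fin 2) (Fin 2) ℂ)) = 1 := by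
  ext x y
  simp [pauliString, Matrix.one_apply, Finset.prod_boole, funext_iff]

theorem twoQubitOp_mul_self {A B : Matrix (Fin 2) (Fin 2) ℂ} (hA : A * A = 1) (hB : B * B = 1)
    (i j : Fin N) : twoQubitOp A B i j * twoQubitOp A B i j = 1 := by
  rw [twoQubitOp, pauliString_mul, ← pauliString_one]
  congr 1
  ext1 k
  split_ifs
  exacts [hA, hB, one_mul 1]

theorem pauliString_mulVec_ket {P : Fin N → Matrix (Fin 2) (Fin 2) ℂ} {x y : Fin N → Fin 2}
    {a : Fin N → ℂ} (h : ∀ k b, P k b (x k) = if b = y k then a k else 0) :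
    pauliString P *ᵥ ket x = (∏ k, a k) • ket y := by
  funext z
  simp only [mulVec, dotProduct, ket, mul_ite, mul_one, mul_zero, Finset.sum_ite_eq',
    Finset.mem_univ, if_true, pauliString, h, Finset.prod_ite_zero, Pi.smul_apply, smul_eq_mul]
  simp [funext_iff]

theorem twoQubitOp_mulVec_ket {A B : Matrix (Fin 2) (Fin 2) ℂ} {p c : Fin N} (hpc : p ≠ c)
    {x : Fin N → Fin 2} {a b : Fin 2} {α β : ℂ}
    (hA : ∀ a', A a' (x p) = if a' = a then α else 0)
    (hB : ∀ b', B b' (x c) = if b' = b then β else 0) :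
    twoQubitOp A B p c *ᵥ ket x = (α * β) • ket (update (update x p a) c b) := by
  have hprod : ∏ k, (if k = p then α else if k = c then β else 1) = α * β := by
    rw [Fintype.prod_eq_mul_prod_compl p, if_pos rfl,
      Finset.prod_eq_single_of_mem c (by simpa using hpc.symm)]
    · simp [hpc.symm]
    · intro k _ hkc
      simp_all
  rw [twoQubitOp,
    pauliString_mulVec_ket (a := fun k => if k = p then α else if k = c then β else 1), hprod]
  intro k b'
  by_cases hkp : k = p
  · subst hkp
    simp [hpc, hA]
  · by_cases hkc : k = c
    · subst hkc
      simp [hkp, hB]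
    · simp [hkp, hkc, Matrix.one_apply]

theorem twoQubitOp_PauliZ_PauliY_mulVec_ket {p c : Fin N} (hpc : p ≠ c) (x : Fin N → Fin 2) :
    twoQubitOp PauliZ PauliY p c *ᵥ ket x =
      (PauliZ (x p) (x p) * PauliY (1 - x c) (x c)) • ket (update x c (1 - x c)) := by
  rw [twoQubitOp_mulVec_ket hpc (PauliZ_apply_eq_ite _) (PauliY_apply_eq_ite _), update_eq_self]

end

theorem cosh_neg_I_mul_pi_div_four :
    Complex.cosh (-Complex.I * (Real.pi / 4)) = (((Real.sqrt 2)⁻¹ : ℝ) : ℂ) := by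
  rw [neg_mul, Complex.cosh_neg, mul_comm, Complex.cosh_mul_I, ← Complex.ofReal_ofNat,
    ← Complex.ofReal_div, ← Complex.ofReal_cos, Real.cos_pi_div_four, Real.sqrt_div_self', one_div]

theorem sinh_neg_I_mul_pi_div_four :
    Complex.sinh (-Complex.I * (Real.pi / 4)) = -(((Real.sqrt 2)⁻¹ : ℝ) : ℂ) * Complex.I := by
  rw [neg_mul, Complex.sinh_neg, mul_comm, Complex.sinh_mul_I, ← Complex.ofReal_ofNat,
    ← Complex.ofReal_div, ← Complex.ofReal_sin, Real.sin_pi_div_four, Real.sqrt_div_self', one_div,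
    neg_mul]

theorem gateZY_pi_half_induction_step_general {N : ℕ} (p c : Fin N) (hpc : p ≠ c)
    (u : Fin N → Fin 2) (hup : u p = 0) :
    NormedSpace.exp ((-Complex.I * ((Real.pi : ℂ) / 4)) • twoQubitOp PauliZ PauliY p c) *ᵥ
      ((1 / 2 : ℂ) • (ket (Function.update u c 0) + ket (Function.update u c 1)
        + ket (Function.update (fun k => 1 - u k) c 0)
        + ket (Function.update (fun k => 1 - u k) c 1)))
      = (((Real.sqrt 2)⁻¹ : ℝ) : ℂ) •
          (ket (Function.update u c 1) + ket (Function.update (fun k => 1 - u k) c 0)) := by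
  set A := twoQubitOp PauliZ PauliY p c
  set ū : Fin N → Fin 2 := fun k => 1 - u k
  have hūp : ū p = 1 := by simp [ū, hup]
  have h₀ : A *ᵥ ket (update u c 0) = Complex.I • ket (update u c 1) := by
    rw [twoQubitOp_PauliZ_PauliY_mulVec_ket hpc]
    simp [update_of_ne hpc, hup, PauliZ, PauliY]
  have h₁ : A *ᵥ ket (update u c 1) = -Complex.I • ket (update u c 0) := by
    rw [twoQubitOp_PauliZ_PauliY_mulVec_ket hpc]
    simp [update_of_ne hpc, hup, PauliZ, PauliY]
  have h₂ : A *ᵥ ket (update ū c 0) = -Complex.I • ket (update ū c 1) := by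
    rw [twoQubitOp_PauliZ_PauliY_mulVec_ket hpc]
    simp [update_of_ne hpc, hūp, PauliZ, PauliY]
  have h₃ : A *ᵥ ket (update ū c 1) = Complex.I • ket (update ū c 0) := by
    rw [twoQubitOp_PauliZ_PauliY_mulVec_ket hpc]
    simp [update_of_ne hpc, hūp, PauliZ, PauliY]
  rw [exp_smul_eq_cosh_add_sinh_of_mul_self_eq_one
      (twoQubitOp_mul_self PauliZ_mul_self PauliY_mul_self p c),
    cosh_neg_I_mul_pi_div_four, sinh_neg_I_mul_pi_div_four, add_mulVec, smul_mulVec, one_mulVec,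
    smul_mulVec, mulVec_smul, mulVec_add, mulVec_add, mulVec_add, h₀, h₁, h₂, h₃]
  set r : ℂ := (((Real.sqrt 2)⁻¹ : ℝ) : ℂ)
  linear_combination (norm := module) Complex.I_sq • ((r / 2) •
    (ket (update u c 0) - ket (update u c 1) - ket (update ū c 0) + ket (update ū c 1)))

/-- **induction step of Theorem 1.** For `p ≠ c` and a bit string `u` with
`u p = 0`, applying `exp (−(iπ/4)·Z_p Y_c)` to
`(1/2)(|u^{c→0}⟩ + |u^{c→1}⟩ + |ū^{c→0}⟩ + |ū^{c→1}⟩)` yields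
`(|u^{c→1}⟩ + |ū^{c→0}⟩)/√2`. -/
theorem gateZY_pi_half_induction_step {N : ℕ} (hN : 2 ≤ N) (p c : Fin N) (hpc : p ≠ c)
    (u : Fin N → Fin 2) (hup : u p = 0) :
    NormedSpace.exp ((-Complex.I * ((Real.pi : ℂ) / 4)) • twoQubitOp PauliZ PauliY p c) *ᵥ
      ((1 / 2 : ℂ) • (ket (Function.update u c 0) + ket (Function.update u c 1)
        + ket (Function.update (fun k => 1 - u k) c 0)
        + ket (Function.update (fun k => 1 - u k) c 1)))
      = (((Real.sqrt 2)⁻¹ : ℝ) : ℂ) •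
          (ket (Function.update u c 1) + ket (Function.update (fun k => 1 - u k) c 0)) :=
  gateZY_pi_half_induction_step_general p c hpc u hup
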